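/- Let A be a p×p real symmetric matrix with spectral decomposition A = V·diag(a_1, …, a_p)·Vᵀ (V orthogonal), and let η > 0. Then the minimizer of tr(AΘ) − log det(Θ) + η‖Θ‖_F² over symmetric positive definite p×p matrices Θ is Θ* = V·diag(d_1, …, d_p)·Vᵀ, where d_j = (−a_j + √(a_j² + 8η))/(4η) > 0 for each j; equivalently, 1/d_j = (a_j + √(a_j² + 8η))/2. -/

import Mathlib

/-!
A positive definite `T` with `T⁻¹ = A + 2ηT` (the vanishing gradient of
`f(Θ) = tr(AΘ) - log det Θ + η‖Θ‖_F²`) minimizes `f`: the tangent bound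
`log det X ≤ log det T + tr(T⁻¹X) - p`, which is `log λ ≤ λ - 1` for the eigenvalues of `BXBᵀ`
where `T⁻¹ = BᵀB`, turns the stationarity equation into `f X - f T ≥ η‖X - T‖_F² ≥ 0`.
For `A = V diag(a) Vᵀ` and `T = V diag(d) Vᵀ` that equation reads `1/d_j = a_j + 2η d_j`,
the quadratic whose positive root is the stated `d_j`.
-/

open Matrix BigOperators Kronecker

/-- Frobenius norm of a real matrix. -/
noncomputable def frobNorm {n : Type*} [Fintype n] (A : Matrix n n ℝ) : ℝ :=
  Real.sqrt (∑ i, ∑ j, (A i j)^2)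

/-- Entrywise L1 norm of a real matrix. -/
noncomputable def l1Norm {n : Type*} [Fintype n] (A : Matrix n n ℝ) : ℝ :=
  ∑ i, ∑ j, |A i j|

/-- Spectral (ℓ2 operator) norm of a real matrix. -/
noncomputable def specNorm {n : Type*} [Fintype n] [DecidableEq n] (A : Matrix n n ℝ) : ℝ :=
  ‖Matrix.toEuclideanCLM (𝕜 := ℝ) A‖

/-- Largest eigenvalue ρ₁(A) of a symmetric real matrix (junk value 0 otherwise). -/
noncomputable def maxEig {n : Type*} [Fintype n] [DecidableEq n] (A : Matrix n n ℝ) : ℝ :=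
  if h : A.IsHermitian then ⨆ i, h.eigenvalues i else 0

/-- Smallest eigenvalue ρ_p(A) of a symmetric real matrix (junk value 0 otherwise). -/
noncomputable def minEig {n : Type*} [Fintype n] [DecidableEq n] (A : Matrix n n ℝ) : ℝ :=
  if h : A.IsHermitian then ⨅ i, h.eigenvalues i else 0

/-- Loewner order: A ⪯ B iff B - A is positive semidefinite. -/
def loewnerLE {n : Type*} [Fintype n] (A B : Matrix n n ℝ) : Prop := (B - A).PosSemidef

/-- Entrywise soft-thresholding operator. -/
noncomputable def Sft {n : Type*} (A : Matrix n n ℝ) (τ : ℝ) : Matrix n n ℝ :=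
  Matrix.of fun i j => Real.sign (A i j) * max (|A i j| - τ) 0

/-- The elastic-net penalized Gaussian likelihood objective
  F(Ω) = tr(S̃Ω) − log det Ω + γ1‖Ω‖₁ + γ2‖Ω‖_F². -/
noncomputable def genObj {n : Type*} [Fintype n] [DecidableEq n]
    (S : Matrix n n ℝ) (γ1 γ2 : ℝ) (Ω : Matrix n n ℝ) : ℝ :=
  (S * Ω).trace - Real.log Ω.det + γ1 * l1Norm Ω + γ2 * (frobNorm Ω)^2

lemma frobNorm_sq {n : Type*} [Fintype n] (M : Matrix n n ℝ) :
    frobNorm M ^ 2 = ∑ i, ∑ j, M i j ^ 2 :=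
  Real.sq_sqrt <| Finset.sum_nonneg fun _ _ => Finset.sum_nonneg fun _ _ => sq_nonneg _

namespace Matrix

variable {n : Type*} [Fintype n]

lemma IsSymm.trace_mul_eq_sum {T : Matrix n n ℝ} (hT : T.IsSymm) (X : Matrix n n ℝ) :
    (T * X).trace = ∑ i, ∑ j, T i j * X i j := by
  simp only [trace, diag_apply, mul_apply]
  rw [Finset.sum_comm]
  simp only [hT.apply]

lemma IsSymm.trace_mul_self {T : Matrix n n ℝ} (hT : T.IsSymm) :
    (T * T).trace = frobNorm T ^ 2 := by
  rw [hT.trace_mul_eq_sum, frobNorm_sq]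
  simp only [sq]

lemma IsSymm.two_mul_trace_mul_le {T : Matrix n n ℝ} (hT : T.IsSymm) (X : Matrix n n ℝ) :
    2 * (T * X).trace ≤ frobNorm T ^ 2 + frobNorm X ^ 2 := by
  have hsq : frobNorm T ^ 2 + frobNorm X ^ 2 - 2 * (T * X).trace
      = ∑ i, ∑ j, (T i j - X i j) ^ 2 := by
    simp only [hT.trace_mul_eq_sum, frobNorm_sq, Finset.mul_sum, ← Finset.sum_add_distrib,
      ← Finset.sum_sub_distrib]
    exact Finset.sum_congr rfl fun i _ => Finset.sum_congr rfl fun j _ => by ring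
  have : 0 ≤ ∑ i, ∑ j, (T i j - X i j) ^ 2 :=
    Finset.sum_nonneg fun _ _ => Finset.sum_nonneg fun _ _ => sq_nonneg _
  linarith

variable [DecidableEq n]

lemma PosDef.log_det_le_trace_sub_card {M : Matrix n n ℝ} (hM : M.PosDef) :
    Real.log M.det ≤ M.trace - Fintype.card n := by
  have hev := hM.eigenvalues_pos
  rw [hM.isHermitian.det_eq_prod_eigenvalues, hM.isHermitian.trace_eq_sum_eigenvalues]
  simp only [RCLike.ofReal_real_eq_id, id]
  calc Real.log (∏ i, hM.isHermitian.eigenvalues i)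
      = ∑ i, Real.log (hM.isHermitian.eigenvalues i) := Real.log_prod fun i _ => (hev i).ne'
    _ ≤ ∑ i, (hM.isHermitian.eigenvalues i - 1) :=
      Finset.sum_le_sum fun i _ => Real.log_le_sub_one_of_pos (hev i)
    _ = _ := by simp [Finset.sum_sub_distrib]

open scoped MatrixOrder in
lemma PosDef.log_det_le_log_det_add_trace_inv_mul {T X : Matrix n n ℝ} (hT : T.PosDef)
    (hX : X.PosDef) :
    Real.log X.det ≤ Real.log T.det + (T⁻¹ * X).trace - Fintype.card n := by
  obtain ⟨B, hB⟩ : ∃ B : Matrix n n ℝ, T⁻¹ = star B * B :=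
    CStarAlgebra.nonneg_iff_eq_star_mul_self.mp hT.inv.posSemidef.nonneg
  have hdetB : T.det⁻¹ = B.det ^ 2 := by
    rw [← Ring.inverse_eq_inv', ← det_nonsing_inv, hB, det_mul, star_eq_conjTranspose,
      conjTranspose_eq_transpose_of_trivial, det_transpose, sq]
  have hBunit : IsUnit B := (isUnit_iff_isUnit_det B).mpr <| IsUnit.mk0 _ <|
    pow_ne_zero_iff two_ne_zero |>.mp (hdetB ▸ inv_ne_zero hT.det_pos.ne')
  have hM : (B * X * star B).PosDef :=
    (IsUnit.posDef_star_right_conjugate_iff hBunit).mpr hX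
  have hdet : (B * X * star B).det = X.det * T.det⁻¹ := by
    rw [hdetB, det_mul, det_mul, star_eq_conjTranspose, conjTranspose_eq_transpose_of_trivial,
      det_transpose]
    ring
  have htr : (B * X * star B).trace = (T⁻¹ * X).trace := by
    rw [trace_mul_cycle, hB]
  have key := hM.log_det_le_trace_sub_card
  rw [hdet, htr, Real.log_mul hX.det_pos.ne' (inv_pos.mpr hT.det_pos).ne', Real.log_inv] at key
  linarith

lemma inv_conj_diagonal {K : Type*} [Field K] {V : Matrix n n K} (hV : Vᵀ * V = 1) {d : n → K}
    (hd : ∀ j, d j ≠ 0) : (V * diagonal d * Vᵀ)⁻¹ = V * diagonal d⁻¹ * Vᵀ := by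
  refine inv_eq_left_inv ?_
  have hdd : diagonal d⁻¹ * diagonal d = 1 := by
    rw [diagonal_mul_diagonal, ← diagonal_one]
    exact congrArg diagonal (funext fun j => inv_mul_cancel₀ (hd j))
  calc V * diagonal d⁻¹ * Vᵀ * (V * diagonal d * Vᵀ)
      = V * (diagonal d⁻¹ * (Vᵀ * V) * diagonal d) * Vᵀ := by simp only [Matrix.mul_assoc]
    _ = 1 := by rw [hV, Matrix.mul_one, hdd, Matrix.mul_one, mul_eq_one_comm.mp hV]

lemma posDef_conj_diagonal {V : Matrix n n ℝ} (hV : Vᵀ * V = 1) {d : n → ℝ}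
    (hd : ∀ j, 0 < d j) : (V * diagonal d * Vᵀ).PosDef := by
  have hVunit : IsUnit V := (isUnit_iff_isUnit_det V).mpr (isUnit_det_of_left_inverse hV)
  simpa only [star_eq_conjTranspose, conjTranspose_eq_transpose_of_trivial] using
    (IsUnit.posDef_star_right_conjugate_iff hVunit).mpr (PosDef.diagonal hd)

end Matrix

noncomputable def ridgeObjective {n : Type*} [Fintype n] [DecidableEq n] (A : Matrix n n ℝ)
    (η : ℝ) (Θ : Matrix n n ℝ) : ℝ :=
  (A * Θ).trace - Real.log Θ.det + η * frobNorm Θ ^ 2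

theorem ridgeObjective_le_of_inv_eq {n : Type*} [Fintype n] [DecidableEq n]
    {A T X : Matrix n n ℝ} {η : ℝ} (hη : 0 ≤ η) (hT : T.PosDef) (hX : X.PosDef)
    (hstat : T⁻¹ = A + (2 * η) • T) :
    ridgeObjective A η T ≤ ridgeObjective A η X := by
  have hsymm : T.IsSymm := hT.isHermitian
  have hlog := hT.log_det_le_log_det_add_trace_inv_mul hX
  have hcard : (Fintype.card n : ℝ) = (T⁻¹ * T).trace := by
    rw [nonsing_inv_mul _ ((isUnit_iff_isUnit_det _).mp hT.isUnit), trace_one]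
  have hcs := mul_le_mul_of_nonneg_left (hsymm.two_mul_trace_mul_le X) hη
  rw [hstat, add_mul, trace_add, smul_mul, trace_smul] at hlog hcard
  rw [hsymm.trace_mul_self] at hcard
  unfold ridgeObjective
  simp only [smul_eq_mul] at hlog hcard
  linarith

lemma ridgeRoot_pos {a η : ℝ} (hη : 0 < η) : 0 < (-a + Real.sqrt (a ^ 2 + 8 * η)) / (4 * η) := by
  have : a < Real.sqrt (a ^ 2 + 8 * η) := calc
    a ≤ |a| := le_abs_self a
    _ = Real.sqrt (a ^ 2) := (Real.sqrt_sq_eq_abs a).symm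
    _ < Real.sqrt (a ^ 2 + 8 * η) := Real.sqrt_lt_sqrt (sq_nonneg a) (by linarith)
  exact div_pos (by linarith) (by positivity)

lemma inv_ridgeRoot {a η : ℝ} (hη : 0 < η) :
    ((-a + Real.sqrt (a ^ 2 + 8 * η)) / (4 * η))⁻¹ = (a + Real.sqrt (a ^ 2 + 8 * η)) / 2 := by
  have hsq : Real.sqrt (a ^ 2 + 8 * η) ^ 2 = a ^ 2 + 8 * η := Real.sq_sqrt (by positivity)
  refine inv_eq_of_mul_eq_one_right ?_
  field_simp
  linear_combination hsq

lemma inv_ridgeRoot_eq_add {a η : ℝ} (hη : 0 < η) :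
    ((-a + Real.sqrt (a ^ 2 + 8 * η)) / (4 * η))⁻¹
      = a + 2 * η * ((-a + Real.sqrt (a ^ 2 + 8 * η)) / (4 * η)) := by
  rw [inv_ridgeRoot hη]
  field_simp
  ring

theorem stmt15_general {p : ℕ}
    (A V : Matrix (Fin p) (Fin p) ℝ) (a : Fin p → ℝ)
    (hV : Vᵀ * V = 1)
    (hA : A = V * Matrix.diagonal a * Vᵀ)
    (η : ℝ) (hη : 0 < η)
    (d : Fin p → ℝ)
    (hd : ∀ j, d j = (-(a j) + Real.sqrt ((a j)^2 + 8*η)) / (4*η)) :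
    (∀ j, 0 < d j) ∧
    (∀ j, (d j)⁻¹ = (a j + Real.sqrt ((a j)^2 + 8*η)) / 2) ∧
    (V * Matrix.diagonal d * Vᵀ).PosDef ∧
    (∀ Θ : Matrix (Fin p) (Fin p) ℝ, Θ.PosDef →
      (A * (V * Matrix.diagonal d * Vᵀ)).trace
          - Real.log (V * Matrix.diagonal d * Vᵀ).det
          + η * (frobNorm (V * Matrix.diagonal d * Vᵀ))^2 ≤
        (A * Θ).trace - Real.log Θ.det + η * (frobNorm Θ)^2) := by
  have hpos : ∀ j, 0 < d j := fun j => hd j ▸ ridgeRoot_pos hη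
  have hinv : ∀ j, (d j)⁻¹ = (a j + Real.sqrt ((a j)^2 + 8*η)) / 2 :=
    fun j => hd j ▸ inv_ridgeRoot hη
  have hT := posDef_conj_diagonal hV hpos
  refine ⟨hpos, hinv, hT, fun Θ hΘ => ridgeObjective_le_of_inv_eq hη.le hT hΘ ?_⟩
  have hstat : d⁻¹ = a + (2 * η) • d := funext fun j => by
    simpa only [← hd j, Pi.inv_apply, Pi.add_apply, Pi.smul_apply, smul_eq_mul] using
      inv_ridgeRoot_eq_add (a := a j) hη
  have hdiag : diagonal (a + (2 * η) • d) = diagonal a + (2 * η) • diagonal d := by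
    rw [← diagonal_smul, diagonal_add]; rfl
  rw [inv_conj_diagonal hV fun j => (hpos j).ne', hstat, hdiag, hA]
  simp only [Matrix.mul_add, Matrix.add_mul, Matrix.mul_smul, Matrix.smul_mul]

/-- closed form of the ridge-penalized Gaussian likelihood precision matrix
  estimator: the minimizer of tr(AΘ) − log det Θ + η‖Θ‖_F² is V·diag(d)·Vᵀ with
  d_j = (−a_j + √(a_j² + 8η))/(4η) > 0 and 1/d_j = (a_j + √(a_j² + 8η))/2. -/
theorem stmt15 {p : ℕ} (hp : 0 < p)
    (A V : Matrix (Fin p) (Fin p) ℝ) (a : Fin p → ℝ)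
    (hV : Vᵀ * V = 1)
    (hA : A = V * Matrix.diagonal a * Vᵀ)
    (η : ℝ) (hη : 0 < η)
    (d : Fin p → ℝ)
    (hd : ∀ j, d j = (-(a j) + Real.sqrt ((a j)^2 + 8*η)) / (4*η)) :
    (∀ j, 0 < d j) ∧
    (∀ j, (d j)⁻¹ = (a j + Real.sqrt ((a j)^2 + 8*η)) / 2) ∧
    (V * Matrix.diagonal d * Vᵀ).PosDef ∧
    (∀ Θ : Matrix (Fin p) (Fin p) ℝ, Θ.PosDef →
      (A * (V * Matrix.diagonal d * Vᵀ)).trace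
          - Real.log (V * Matrix.diagonal d * Vᵀ).det
          + η * (frobNorm (V * Matrix.diagonal d * Vᵀ))^2 ≤
        (A * Θ).trace - Real.log Θ.det + η * (frobNorm Θ)^2) :=
  stmt15_general A V a hV hA η hη d hd
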